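/- Let G be a graph with minimum degree at least 2 and constant threshold 2 on every vertex, and let S be a dominating set of G. If c is the number of connected components of G \ S, then dyn(G) ≤ dyn(G[S]) + c, where G[S] is the subgraph induced on S with every vertex given threshold 2. -/
import Mathlib


open SimpleGraph

/-- One step of the irreversible activation process: every vertex with at least `τ v`
active neighbors becomes active, and active vertices stay active. -/
def activationStep {V : Type*} (G : SimpleGraph V) (τ : V → ℕ) (A : Set V) : Set V :=
  A ∪ {v | τ v ≤ (G.neighborSet v ∩ A).ncard}

/-- `D` is a dynamic monopoly (dynamo) of `(G, τ)`: iterating the activation process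
starting from `D` eventually activates all vertices. -/
def IsDynamo {V : Type*} (G : SimpleGraph V) (τ : V → ℕ) (D : Set V) : Prop :=
  ∃ j : ℕ, (activationStep G τ)^[j] D = Set.univ

/-- `K` is (the vertex set of) a resistant subgraph of `(G, τ)`:
every vertex `v` of `K` satisfies `d_K(v) ≥ d_G(v) − τ(v) + 1` (as integers). -/
def IsResistant {V : Type*} (G : SimpleGraph V) (τ : V → ℕ) (K : Set V) : Prop :=
  K.Nonempty ∧ ∀ v ∈ K, (G.neighborSet v).ncard + 1 ≤ (G.neighborSet v ∩ K).ncard + τ v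

/-- The minimum size of a dynamic monopoly of `(G, τ)`. -/
noncomputable def dyn {V : Type*} (G : SimpleGraph V) (τ : V → ℕ) : ℕ :=
  sInf {k : ℕ | ∃ D : Set V, D.ncard = k ∧ IsDynamo G τ D}

lemma subset_activationStep {V : Type*} (G : SimpleGraph V) (τ : V → ℕ) (A : Set V) :
    A ⊆ activationStep G τ A := Set.subset_union_left

lemma subset_iterate {V : Type*} (G : SimpleGraph V) (τ : V → ℕ) (A : Set V) (n : ℕ) :
    A ⊆ (activationStep G τ)^[n] A := by
  induction n with
  | zero => simp
  | succ n ih =>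
    rw [Function.iterate_succ_apply']
    exact ih.trans (subset_activationStep G τ _)

lemma image_iterate_subset {V : Type*} [Fintype V] (G : SimpleGraph V) (S : Set V)
    (j : ℕ) (B : Set S) (A : Set V) (hBA : Subtype.val '' B ⊆ A) :
    Subtype.val '' ((activationStep (G.induce S) (fun _ => 2))^[j] B)
      ⊆ (activationStep G (fun _ => 2))^[j] A := by
  induction j generalizing B A with
  | zero =>
    simp only [Function.iterate_zero, id]
    exact hBA
  | succ j ih =>
    rw [Function.iterate_succ_apply', Function.iterate_succ_apply']
    set B' := (activationStep (G.induce S) (fun _ => 2))^[j] B with hB'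
    set A' := (activationStep G (fun _ => 2))^[j] A with hA'
    have h' : Subtype.val '' B' ⊆ A' := ih B A hBA
    rintro x ⟨y, hy, rfl⟩
    rcases hy with hy | hy
    · exact Or.inl (h' ⟨y, hy, rfl⟩)
    · right
      simp only [Set.mem_setOf_eq] at hy ⊢
      have hsub : Subtype.val '' ((G.induce S).neighborSet y ∩ B')
          ⊆ G.neighborSet (y : V) ∩ A' := by
        rintro _ ⟨z, ⟨hz1, hz2⟩, rfl⟩
        refine ⟨?_, h' ⟨z, hz2, rfl⟩⟩
        exact hz1
      calc 2 ≤ ((G.induce S).neighborSet y ∩ B').ncard := hy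
        _ = (Subtype.val '' ((G.induce S).neighborSet y ∩ B')).ncard :=
            (Set.ncard_image_of_injective _ Subtype.val_injective).symm
        _ ≤ (G.neighborSet (y : V) ∩ A').ncard := Set.ncard_le_ncard hsub (Set.toFinite _)

lemma exists_fixed {V : Type*} [Fintype V] (G : SimpleGraph V) (τ : V → ℕ) (A : Set V) :
    ∃ n, activationStep G τ ((activationStep G τ)^[n] A) = (activationStep G τ)^[n] A := by
  by_contra h
  push_neg at h
  have key : ∀ n, n ≤ ((activationStep G τ)^[n] A).ncard := by
    intro n
    induction n with
    | zero => exact Nat.zero_le _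
    | succ n ih =>
      rw [Function.iterate_succ_apply']
      have hss : (activationStep G τ)^[n] A ⊂ activationStep G τ ((activationStep G τ)^[n] A) :=
        (subset_activationStep G τ _).ssubset_of_ne (Ne.symm (h n))
      have := Set.ncard_lt_ncard hss (Set.toFinite _)
      omega
  have h1 := key (Fintype.card V + 1)
  have h2 : ((activationStep G τ)^[Fintype.card V + 1] A).ncard ≤ Fintype.card V := by
    have := Set.ncard_le_ncard (Set.subset_univ ((activationStep G τ)^[Fintype.card V + 1] A))
      Set.finite_univ
    simpa [Set.ncard_univ, Nat.card_eq_fintype_card] using this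
  omega

/-- If `G` has minimum degree at least `2`, constant threshold `2`, and `S` is a dominating
set whose complement induces `c` connected components, then
`dyn(G) ≤ dyn(G[S]) + c`. -/
theorem stmt7 {V : Type*} [Fintype V] [DecidableEq V] (G : SimpleGraph V)
    (hmin : ∀ v : V, 2 ≤ (G.neighborSet v).ncard)
    (S : Finset V) (hdom : ∀ v ∉ S, ∃ u ∈ S, G.Adj u v) :
    dyn G (fun _ => 2)
      ≤ dyn (G.induce (↑S : Set V)) (fun _ => 2)
        + Nat.card (G.induce (↑(Sᶜ) : Set V)).ConnectedComponent := by
  classical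
  set H := G.induce (↑(Sᶜ) : Set V) with hH
  set GS := G.induce (↑S : Set V) with hGS
  -- Obtain an optimal dynamo of G[S]
  have hne : {k : ℕ | ∃ D : Set ↥(↑S : Set V), D.ncard = k ∧ IsDynamo GS (fun _ => 2) D}.Nonempty :=
    ⟨(Set.univ : Set ↥(↑S : Set V)).ncard, Set.univ, rfl, ⟨0, rfl⟩⟩
  have hmem := Nat.sInf_mem hne
  obtain ⟨D, hDcard, j, hj⟩ := hmem
  -- seeds: one vertex per connected component of G - S
  set seed : H.ConnectedComponent → V := fun C => (C.out : V) with hseed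
  set seeds : Set V := Set.range seed with hseeds
  have hseedscard : seeds.ncard ≤ Nat.card H.ConnectedComponent := by
    rw [hseeds, ← Set.image_univ]
    calc (seed '' Set.univ).ncard ≤ (Set.univ : Set H.ConnectedComponent).ncard :=
          Set.ncard_image_le Set.finite_univ
      _ = Nat.card H.ConnectedComponent := Set.ncard_univ _
  set D' : Set V := (Subtype.val '' D) ∪ seeds with hD'
  -- D' is a dynamo of G
  have hSsub : (↑S : Set V) ⊆ (activationStep G (fun _ => 2))^[j] D' := by
    have h1 : Subtype.val '' D ⊆ D' := Set.subset_union_left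
    have h2 := image_iterate_subset G (↑S : Set V) j D D' h1
    rw [hj] at h2
    rwa [Set.image_univ, Subtype.range_val] at h2
  have hseedsub : seeds ⊆ (activationStep G (fun _ => 2))^[j] D' :=
    Set.subset_union_right.trans (subset_iterate G _ D' j)
  obtain ⟨n, hfix⟩ := exists_fixed G (fun _ => 2) ((activationStep G (fun _ => 2))^[j] D')
  set F : Set V := (activationStep G (fun _ => 2))^[n] ((activationStep G (fun _ => 2))^[j] D')
    with hF
  have hSF : (↑S : Set V) ⊆ F := hSsub.trans (subset_iterate G _ _ n)
  have hseedF : seeds ⊆ F := hseedsub.trans (subset_iterate G _ _ n)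
  -- any vertex adjacent in H to a vertex of F, given S ⊆ F, gets activated
  have hstepF : ∀ (a c : ↥(↑(Sᶜ) : Set V)), H.Adj a c → (a : V) ∈ F → (c : V) ∈ F := by
    intro a c hac haF
    have hcS : (c : V) ∉ S := by
      have := c.2
      simpa [Finset.mem_coe, Finset.mem_compl] using this
    have haS : (a : V) ∉ S := by
      have := a.2
      simpa [Finset.mem_coe, Finset.mem_compl] using this
    obtain ⟨u, huS, hu⟩ := hdom (c : V) hcS
    have huF : u ∈ F := hSF (by simpa [Finset.mem_coe] using huS)
    have hadj : G.Adj (a : V) (c : V) := hac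
    have hne' : u ≠ (a : V) := fun h => haS (h ▸ huS)
    have hpair : ({u, (a : V)} : Set V) ⊆ G.neighborSet (c : V) ∩ F := by
      rintro x (rfl | rfl)
      · exact ⟨hu.symm, huF⟩
      · exact ⟨hadj.symm, haF⟩
    have h2 : 2 ≤ (G.neighborSet (c : V) ∩ F).ncard := by
      calc 2 = ({u, (a : V)} : Set V).ncard := (Set.ncard_pair hne').symm
        _ ≤ _ := Set.ncard_le_ncard hpair (Set.toFinite _)
    have : (c : V) ∈ activationStep G (fun _ => 2) F := Or.inr h2
    rwa [hF, hfix] at this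
  have hFuniv : F = Set.univ := by
    ext v
    simp only [Set.mem_univ, iff_true]
    by_cases hv : v ∈ S
    · exact hSF (by simpa [Finset.mem_coe] using hv)
    · have hv' : v ∈ (↑(Sᶜ) : Set V) := by
        simpa [Finset.mem_coe, Finset.mem_compl] using hv
      set v' : ↥(↑(Sᶜ) : Set V) := ⟨v, hv'⟩ with hv'def
      set C := H.connectedComponentMk v' with hC
      have hout : H.connectedComponentMk C.out = C := C.out_eq
      have hreach : H.Reachable C.out v' := ConnectedComponent.exact (by rw [hout, hC])
      have hseedmem : (C.out : V) ∈ F := hseedF ⟨C, rfl⟩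
      obtain ⟨W⟩ := hreach
      clear hout hC
      have : ∀ (a b : ↥(↑(Sᶜ) : Set V)), H.Walk a b → (a : V) ∈ F → (b : V) ∈ F := by
        intro a b W
        induction W with
        | nil => exact id
        | cons h p ih => intro ha; exact ih (hstepF _ _ h ha)
      exact this _ _ W hseedmem
  have hdyn : IsDynamo G (fun _ => 2) D' := by
    refine ⟨n + j, ?_⟩
    rw [Function.iterate_add_apply]
    exact hFuniv
  -- conclude
  have hle : dyn G (fun _ => 2) ≤ D'.ncard := Nat.sInf_le ⟨D', rfl, hdyn⟩
  have hcard : D'.ncard ≤ D.ncard + Nat.card H.ConnectedComponent := by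
    calc D'.ncard ≤ (Subtype.val '' D).ncard + seeds.ncard := Set.ncard_union_le _ _
      _ = D.ncard + seeds.ncard := by
          rw [Set.ncard_image_of_injective _ Subtype.val_injective]
      _ ≤ D.ncard + Nat.card H.ConnectedComponent := by omega
  have hdcd : D.ncard = dyn GS (fun _ => 2) := hDcard
  rw [hdcd] at hcard
  exact hle.trans hcard
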